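/- arXiv:1809.10818 — 5 statements merged into one kernel-verified Lean document; each statement's English description precedes it below -/
import Mathlib

section
/- Fix ε ≥ 0. Under Assumption 1, the function f* is feasible and minimizes the ambiguity among all feasible discriminant functions: for every measurable feasible f : 𝒳 → ℝ, one has R(f*, ε) ≤ R(f, ε), where R(f, ε) = P(|f(X)| ≤ ε). -/
/-!
A Neyman–Pearson argument. With `ν` the law of `X`, the two classes have densities `η` and
`1 - η` with respect to `ν`. Among measurable sets whose class `-1` mass is at most that of
`{η > t₋₁}`, this upper level set carries the most `ν`-mass, since it collects the points where the
class `-1` density is smallest; symmetrically for class `1` and `{η < t₁}`. The tails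
`{f* > ε}` and `{f* < -ε}` are exactly these level sets, while the tails of a feasible `f` satisfy
the two mass constraints; the ambiguity set is the complement of the two disjoint tails.
-/

open MeasureTheory ProbabilityTheory Set
open scoped ENNReal

theorem measure_le_of_setLIntegral_le_of_threshold {α : Type*} [MeasurableSpace α]
    {μ : Measure α} {w : α → ℝ≥0∞} {c : ℝ≥0∞} {B T : Set α} (hc₀ : c ≠ 0) (hc : c ≠ ∞)
    (hB : MeasurableSet B) (hT : MeasurableSet T) (hfin : ∫⁻ x in B ∩ T, w x ∂μ ≠ ∞)
    (hBT : ∀ x ∈ B \ T, c ≤ w x) (hTB : ∀ x ∈ T \ B, w x ≤ c)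
    (hint : ∫⁻ x in B, w x ∂μ ≤ ∫⁻ x in T, w x ∂μ) : μ B ≤ μ T := by
  rw [← lintegral_inter_add_sdiff w B hT, ← lintegral_inter_add_sdiff w T hB, inter_comm T B]
    at hint
  have hdiff : c * μ (B \ T) ≤ c * μ (T \ B) := calc
    c * μ (B \ T) = ∫⁻ _ in B \ T, c ∂μ := (setLIntegral_const _ c).symm
    _ ≤ ∫⁻ x in B \ T, w x ∂μ := setLIntegral_mono' (hB.diff hT) hBT
    _ ≤ ∫⁻ x in T \ B, w x ∂μ := (ENNReal.add_le_add_iff_left hfin).mp hint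
    _ ≤ ∫⁻ _ in T \ B, c ∂μ := setLIntegral_mono' (hT.diff hB) hTB
    _ = c * μ (T \ B) := setLIntegral_const _ c
  calc μ B = μ (T ∩ B) + μ (B \ T) := by rw [inter_comm, measure_inter_add_sdiff B hT]
    _ ≤ μ (T ∩ B) + μ (T \ B) := by
      gcongr μ (T ∩ B) + ?_; exact (ENNReal.mul_le_mul_iff_right hc₀ hc).mp hdiff
    _ = μ T := measure_inter_add_sdiff T hB

theorem measure_abs_le_le_of_tails_le {Ω : Type*} [MeasurableSpace Ω] {μ : Measure Ω}
    [IsFiniteMeasure μ] {g h : Ω → ℝ} {ε : ℝ} (hε : 0 ≤ ε)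
    (hmeas_pos : MeasurableSet {ω | ε < h ω}) (hmeas_neg : MeasurableSet {ω | h ω < -ε})
    (hpos : μ {ω | ε < g ω} ≤ μ {ω | ε < h ω}) (hneg : μ {ω | g ω < -ε} ≤ μ {ω | h ω < -ε}) :
    μ {ω | |h ω| ≤ ε} ≤ μ {ω | |g ω| ≤ ε} := by
  have hcompl (u : Ω → ℝ) : {ω | |u ω| ≤ ε} = ({ω | ε < u ω} ∪ {ω | u ω < -ε})ᶜ := by
    ext ω
    simp [abs_le, and_comm]
  have hdisj : Disjoint {ω | ε < h ω} {ω | h ω < -ε} :=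
    disjoint_left.2 fun ω (hp : ε < h ω) (hn : h ω < -ε) => by linarith
  rw [hcompl g, hcompl h, measure_compl (hmeas_pos.union hmeas_neg) (measure_ne_top _ _),
    measure_union hdisj hmeas_neg, tsub_le_iff_right]
  set G := {ω | ε < g ω} ∪ {ω | g ω < -ε}
  calc μ univ ≤ μ Gᶜ + μ G := by rw [add_comm]; exact measure_univ_le_add_compl G
    _ ≤ _ := by gcongr; exact (measure_union_le _ _).trans (add_le_add hpos hneg)

section ClassLaws

variable {Ω 𝒳 : Type*} [MeasurableSpace Ω] [MeasurableSpace 𝒳] {P : Measure Ω}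

theorem measure_inter_le_of_cond_le [IsFiniteMeasure P] {s t t' : Set Ω} (hs : MeasurableSet s)
    (h : P[t | s] ≤ P[t' | s]) : P (s ∩ t) ≤ P (s ∩ t') := by
  rw [← cond_mul_eq_inter hs, ← cond_mul_eq_inter hs]
  gcongr

theorem cond_congr_of_inter_eq {s t t' : Set Ω} (hs : MeasurableSet s) (h : s ∩ t = s ∩ t') :
    P[t | s] = P[t' | s] := by
  rw [← cond_inter_self hs, h, cond_inter_self hs]

theorem setLIntegral_ne_top_of_le_one [IsFiniteMeasure P] {w : Ω → ℝ≥0∞} (hw : ∀ ω, w ω ≤ 1)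
    (s : Set Ω) : ∫⁻ ω in s, w ω ∂P ≠ ∞ :=
  (setLIntegral_lt_top_of_le_nnreal (measure_ne_top P s) ⟨1, fun ω _ => by simpa using hw ω⟩).ne

theorem measure_preimage_inter_compl_eq_setLIntegral [IsFiniteMeasure P] {X : Ω → 𝒳}
    (hX : Measurable X) {s : Set Ω} (hs : MeasurableSet s) {w : 𝒳 → ℝ≥0∞} (hw : Measurable w)
    (hw1 : ∀ x, w x ≤ 1)
    {A : Set 𝒳} (hA : MeasurableSet A) (hlaw : P (X ⁻¹' A ∩ s) = ∫⁻ x in A, w x ∂P.map X) :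
    P (X ⁻¹' A ∩ sᶜ) = ∫⁻ x in A, (1 - w x) ∂P.map X := by
  rw [lintegral_sub hw (setLIntegral_ne_top_of_le_one hw1 A) (ae_of_all _ hw1),
    setLIntegral_one, ← hlaw, Measure.map_apply hX hA]
  refine ENNReal.eq_sub_of_add_eq (measure_ne_top P _) ?_
  rw [← sdiff_eq, measure_sdiff_add_inter _ hs]

theorem measure_preimage_le_of_cond_le [IsFiniteMeasure P] {X : Ω → 𝒳} (hX : Measurable X)
    {s : Set Ω} (hs : MeasurableSet s) {w : 𝒳 → ℝ≥0∞} (hw1 : ∀ x, w x ≤ 1)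
    (hlaw : ∀ A, MeasurableSet A → P (X ⁻¹' A ∩ s) = ∫⁻ x in A, w x ∂P.map X)
    {c : ℝ≥0∞} (hc₀ : c ≠ 0) (hc : c ≠ ∞) {B T : Set 𝒳} (hB : MeasurableSet B)
    (hT : MeasurableSet T) (hBT : ∀ x ∈ B \ T, c ≤ w x) (hTB : ∀ x ∈ T \ B, w x ≤ c)
    (hcond : P[X ⁻¹' B | s] ≤ P[X ⁻¹' T | s]) : P (X ⁻¹' B) ≤ P (X ⁻¹' T) := by
  rw [← Measure.map_apply hX hB, ← Measure.map_apply hX hT]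
  refine measure_le_of_setLIntegral_le_of_threshold hc₀ hc hB hT
    (setLIntegral_ne_top_of_le_one hw1 _) hBT hTB ?_
  rw [← hlaw B hB, ← hlaw T hT, inter_comm, inter_comm (X ⁻¹' T)]
  exact measure_inter_le_of_cond_le hs hcond

end ClassLaws

section LevelSets

variable {Ω 𝒳 : Type*} [MeasurableSpace Ω] [MeasurableSpace 𝒳] {P : Measure Ω}
  [IsFiniteMeasure P] {X : Ω → 𝒳} {s : Set Ω} {η : 𝒳 → ℝ} {B : Set 𝒳} {t : ℝ}

theorem measure_preimage_le_of_cond_le_superlevel (hX : Measurable X) (hs : MeasurableSet s)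
    (hη : Measurable η)
    (hlaw : ∀ A, MeasurableSet A →
      P (X ⁻¹' A ∩ s) = ∫⁻ x in A, (1 - ENNReal.ofReal (η x)) ∂P.map X)
    (ht : t < 1) (hB : MeasurableSet B)
    (hcond : P[X ⁻¹' B | s] ≤ P[X ⁻¹' {x | t < η x} | s]) :
    P (X ⁻¹' B) ≤ P (X ⁻¹' {x | t < η x}) :=
  measure_preimage_le_of_cond_le hX hs (fun _ => tsub_le_self) hlaw
    (tsub_pos_of_lt (ENNReal.ofReal_lt_one.2 ht)).ne' (ENNReal.sub_ne_top ENNReal.one_ne_top)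
    hB (measurableSet_lt measurable_const hη)
    (fun _ hx => tsub_le_tsub_left (ENNReal.ofReal_le_ofReal (not_lt.1 hx.2)) 1)
    (fun _ hx => tsub_le_tsub_left (ENNReal.ofReal_le_ofReal (le_of_lt hx.1)) 1) hcond

theorem measure_preimage_le_of_cond_le_sublevel (hX : Measurable X) (hs : MeasurableSet s)
    (hη : Measurable η) (hη1 : ∀ x, η x ≤ 1)
    (hlaw : ∀ A, MeasurableSet A → P (X ⁻¹' A ∩ s) = ∫⁻ x in A, ENNReal.ofReal (η x) ∂P.map X)
    (ht : 0 < t) (hB : MeasurableSet B)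
    (hcond : P[X ⁻¹' B | s] ≤ P[X ⁻¹' {x | η x < t} | s]) :
    P (X ⁻¹' B) ≤ P (X ⁻¹' {x | η x < t}) :=
  measure_preimage_le_of_cond_le hX hs (fun x => ENNReal.ofReal_le_one.2 (hη1 x)) hlaw
    (ENNReal.ofReal_pos.2 ht).ne' ENNReal.ofReal_ne_top hB (measurableSet_lt hη measurable_const)
    (fun _ hx => ENNReal.ofReal_le_ofReal (not_lt.1 hx.2))
    (fun _ hx => ENNReal.ofReal_le_ofReal (le_of_lt hx.1)) hcond

end LevelSets

section ThresholdRule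

variable {ε : ℝ}

/-- The value of `f*` at a point `x` with `η x = r`. -/
noncomputable def thresholdRule (tm t1 ε r : ℝ) : ℝ :=
  if tm < r then 1 + ε else if t1 ≤ r then ε * Real.sign (r - 1 / 2) else -(1 + ε)

theorem abs_mul_sign_le (hε : 0 ≤ ε) (r : ℝ) : |ε * Real.sign r| ≤ ε := by
  rcases Real.sign_apply_eq r with h | h | h <;> simp [h, abs_of_nonneg hε, hε]

theorem lt_thresholdRule_iff (hε : 0 ≤ ε) {tm t1 r : ℝ} : ε < thresholdRule tm t1 ε r ↔ tm < r := by
  have := abs_le.1 (abs_mul_sign_le hε (r - 1 / 2))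
  unfold thresholdRule
  split_ifs <;> constructor <;> intros <;> linarith

theorem thresholdRule_lt_neg_iff (hε : 0 ≤ ε) {tm t1 r : ℝ} (ht : t1 ≤ tm) :
    thresholdRule tm t1 ε r < -ε ↔ r < t1 := by
  have := abs_le.1 (abs_mul_sign_le hε (r - 1 / 2))
  unfold thresholdRule
  split_ifs <;> constructor <;> intros <;> linarith

end ThresholdRule

section Labels

variable {Ω : Type*} [MeasurableSpace Ω] {P : Measure Ω} {Y : Ω → ℝ}

theorem cond_mul_lt_neg_of_eq_neg_one (hY : Measurable Y) (u : Ω → ℝ) (ε : ℝ) :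
    P[{ω | Y ω * u ω < -ε} | {ω | Y ω = -1}] = P[{ω | ε < u ω} | {ω | Y ω = -1}] := by
  refine cond_congr_of_inter_eq (hY (measurableSet_singleton _)) (ext fun ω => ?_)
  simp only [mem_inter_iff, mem_ofPred_eq, and_congr_right_iff]
  intro hYω
  rw [hYω, neg_one_mul, neg_lt_neg_iff]

theorem cond_mul_lt_neg_of_eq_one (hY : Measurable Y) (u : Ω → ℝ) (ε : ℝ) :
    P[{ω | Y ω * u ω < -ε} | {ω | Y ω = 1}] = P[{ω | u ω < -ε} | {ω | Y ω = 1}] := by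
  refine cond_congr_of_inter_eq (hY (measurableSet_singleton _)) (ext fun ω => ?_)
  simp only [mem_inter_iff, mem_ofPred_eq, and_congr_right_iff]
  intro hYω
  rw [hYω, one_mul]

theorem measure_preimage_inter_eq_neg_one_eq_setLIntegral {𝒳 : Type*} [MeasurableSpace 𝒳]
    [IsFiniteMeasure P] {X : Ω → 𝒳} (hX : Measurable X) (hY : Measurable Y)
    (hYval : ∀ ω, Y ω = 1 ∨ Y ω = -1) {η : 𝒳 → ℝ} (hη : Measurable η) (hη1 : ∀ x, η x ≤ 1)
    (hreg : ∀ A : Set 𝒳, MeasurableSet A →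
      P (X ⁻¹' A ∩ {ω | Y ω = 1}) = ∫⁻ x in A, ENNReal.ofReal (η x) ∂P.map X)
    (A : Set 𝒳) (hA : MeasurableSet A) :
    P (X ⁻¹' A ∩ {ω | Y ω = -1}) = ∫⁻ x in A, (1 - ENNReal.ofReal (η x)) ∂P.map X := by
  have hcompl : {ω | Y ω = 1}ᶜ = {ω | Y ω = -1} := by
    ext ω
    rcases hYval ω with h | h <;> norm_num [h]
  rw [← hcompl]
  exact measure_preimage_inter_compl_eq_setLIntegral hX (hY (measurableSet_singleton _))
    hη.ennreal_ofReal (fun x => ENNReal.ofReal_le_one.2 (hη1 x)) hA (hreg A hA)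

end Labels

theorem fstar_minimizes_ambiguity_general
    {𝒳 : Type*} [MeasurableSpace 𝒳]
    {Ω : Type*} [MeasurableSpace Ω] (P : Measure Ω) [IsProbabilityMeasure P]
    (X : Ω → 𝒳) (Y : Ω → ℝ) (hX : Measurable X) (hY : Measurable Y)
    (hYval : ∀ ω, Y ω = 1 ∨ Y ω = -1)
    -- η is a measurable version of the regression function x ↦ P(Y = 1 ∣ X = x)
    (η : 𝒳 → ℝ) (hη : Measurable η) (hη01 : ∀ x, η x ∈ Set.Icc (0 : ℝ) 1)
    (hreg : ∀ A : Set 𝒳, MeasurableSet A →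
      P {ω | X ω ∈ A ∧ Y ω = 1} = ∫⁻ x in A, ENNReal.ofReal (η x) ∂(P.map X))
    -- noncoverage levels and thresholds
    (αm α1 : ℝ) (hαm : αm ∈ Set.Ioo (0 : ℝ) 1) (hα1 : α1 ∈ Set.Ioo (0 : ℝ) 1)
    (tm t1 : ℝ)
    (htm : P[|{ω | Y ω = -1}] {ω | tm < η (X ω)} = ENNReal.ofReal αm)
    (ht1 : P[|{ω | Y ω = 1}] {ω | η (X ω) < t1} = ENNReal.ofReal α1)
    -- Assumption 1: the distribution of η(X) is atomless under both class-conditional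
    -- distributions, and t1 ≤ 1/2 ≤ tm
    (ht1half : t1 ≤ 1 / 2) (hhalftm : 1 / 2 ≤ tm)
    (ε : ℝ) (hε : 0 ≤ ε)
    -- the Bayes-type rule f*
    (fstar : 𝒳 → ℝ)
    (hfstar : ∀ x, fstar x =
      if tm < η x then 1 + ε
      else if t1 ≤ η x then ε * Real.sign (η x - 1 / 2)
      else -(1 + ε))
    -- an arbitrary measurable feasible competitor f
    (f : 𝒳 → ℝ) (hf : Measurable f)
    (hfeasm : P[|{ω | Y ω = -1}] {ω | Y ω * f (X ω) < -ε} ≤ ENNReal.ofReal αm)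
    (hfeas1 : P[|{ω | Y ω = 1}] {ω | Y ω * f (X ω) < -ε} ≤ ENNReal.ofReal α1) :
    -- f* is feasible, and its ambiguity is no larger than that of f
    (P[|{ω | Y ω = -1}] {ω | Y ω * fstar (X ω) < -ε} ≤ ENNReal.ofReal αm ∧
     P[|{ω | Y ω = 1}] {ω | Y ω * fstar (X ω) < -ε} ≤ ENNReal.ofReal α1) ∧
    P {ω | |fstar (X ω)| ≤ ε} ≤ P {ω | |f (X ω)| ≤ ε} := by
  have hT : {x | ε < fstar x} = {x | tm < η x} :=
    ext fun x => show ε < fstar x ↔ tm < η x from hfstar x ▸ lt_thresholdRule_iff hε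
  have hS : {x | fstar x < -ε} = {x | η x < t1} :=
    ext fun x => show fstar x < -ε ↔ η x < t1 from
      hfstar x ▸ thresholdRule_lt_neg_iff hε (ht1half.trans hhalftm)
  have htm1 : tm < 1 := by
    obtain ⟨ω, hω⟩ := nonempty_of_measure_ne_zero (htm ▸ (ENNReal.ofReal_pos.2 hαm.1).ne')
    exact hω.out.trans_le (hη01 _).2
  have ht10 : 0 < t1 := by
    obtain ⟨ω, hω⟩ := nonempty_of_measure_ne_zero (ht1 ▸ (ENNReal.ofReal_pos.2 hα1.1).ne')
    exact (hη01 _).1.trans_lt hω.out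
  have hlaw_m := measure_preimage_inter_eq_neg_one_eq_setLIntegral hX hY hYval hη
    (fun x => (hη01 x).2) hreg
  have hpos : P (X ⁻¹' {x | ε < f x}) ≤ P (X ⁻¹' {x | ε < fstar x}) :=
    hT ▸ measure_preimage_le_of_cond_le_superlevel hX (hY (measurableSet_singleton _)) hη
      hlaw_m htm1 (measurableSet_lt measurable_const hf)
      ((cond_mul_lt_neg_of_eq_neg_one hY _ ε).symm.trans_le (hfeasm.trans htm.ge))
  have hneg : P (X ⁻¹' {x | f x < -ε}) ≤ P (X ⁻¹' {x | fstar x < -ε}) :=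
    hS ▸ measure_preimage_le_of_cond_le_sublevel hX (hY (measurableSet_singleton _)) hη
      (fun x => (hη01 x).2) hreg ht10 (measurableSet_lt hf measurable_const)
      ((cond_mul_lt_neg_of_eq_one hY _ ε).symm.trans_le (hfeas1.trans ht1.ge))
  have hmeas_pos : MeasurableSet (X ⁻¹' {x | ε < fstar x}) :=
    hT ▸ hX (measurableSet_lt measurable_const hη)
  have hmeas_neg : MeasurableSet (X ⁻¹' {x | fstar x < -ε}) :=
    hS ▸ hX (measurableSet_lt hη measurable_const)
  refine ⟨⟨(cond_mul_lt_neg_of_eq_neg_one hY _ ε).trans_le ?_,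
    (cond_mul_lt_neg_of_eq_one hY _ ε).trans_le ?_⟩,
    measure_abs_le_le_of_tails_le hε hmeas_pos hmeas_neg hpos hneg⟩
  · change P[X ⁻¹' {x | ε < fstar x} | _] ≤ _
    rw [hT]; exact htm.le
  · change P[X ⁻¹' {x | fstar x < -ε} | _] ≤ _
    rw [hS]; exact ht1.le

/-- Under Assumption 1, `f*` is feasible and minimizes the ambiguity
`R(f, ε) = P(|f(X)| ≤ ε)` among all measurable feasible discriminant functions. -/
theorem fstar_minimizes_ambiguity
    {𝒳 : Type*} [MeasurableSpace 𝒳]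
    {Ω : Type*} [MeasurableSpace Ω] (P : Measure Ω) [IsProbabilityMeasure P]
    (X : Ω → 𝒳) (Y : Ω → ℝ) (hX : Measurable X) (hY : Measurable Y)
    (hYval : ∀ ω, Y ω = 1 ∨ Y ω = -1)
    (hpos1 : 0 < P {ω | Y ω = 1}) (hposm : 0 < P {ω | Y ω = -1})
    -- η is a measurable version of the regression function x ↦ P(Y = 1 ∣ X = x)
    (η : 𝒳 → ℝ) (hη : Measurable η) (hη01 : ∀ x, η x ∈ Set.Icc (0 : ℝ) 1)
    (hreg : ∀ A : Set 𝒳, MeasurableSet A →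
      P {ω | X ω ∈ A ∧ Y ω = 1} = ∫⁻ x in A, ENNReal.ofReal (η x) ∂(P.map X))
    -- noncoverage levels and thresholds
    (αm α1 : ℝ) (hαm : αm ∈ Set.Ioo (0 : ℝ) 1) (hα1 : α1 ∈ Set.Ioo (0 : ℝ) 1)
    (tm t1 : ℝ)
    (htm : P[|{ω | Y ω = -1}] {ω | tm < η (X ω)} = ENNReal.ofReal αm)
    (ht1 : P[|{ω | Y ω = 1}] {ω | η (X ω) < t1} = ENNReal.ofReal α1)
    -- Assumption 1: the distribution of η(X) is atomless under both class-conditional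
    -- distributions, and t1 ≤ 1/2 ≤ tm
    (hatomlessm : ∀ t : ℝ, P[|{ω | Y ω = -1}] {ω | η (X ω) = t} = 0)
    (hatomless1 : ∀ t : ℝ, P[|{ω | Y ω = 1}] {ω | η (X ω) = t} = 0)
    (ht1half : t1 ≤ 1 / 2) (hhalftm : 1 / 2 ≤ tm)
    (ε : ℝ) (hε : 0 ≤ ε)
    -- the Bayes-type rule f*
    (fstar : 𝒳 → ℝ)
    (hfstar : ∀ x, fstar x =
      if tm < η x then 1 + ε
      else if t1 ≤ η x then ε * Real.sign (η x - 1 / 2)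
      else -(1 + ε))
    -- an arbitrary measurable feasible competitor f
    (f : 𝒳 → ℝ) (hf : Measurable f)
    (hfeasm : P[|{ω | Y ω = -1}] {ω | Y ω * f (X ω) < -ε} ≤ ENNReal.ofReal αm)
    (hfeas1 : P[|{ω | Y ω = 1}] {ω | Y ω * f (X ω) < -ε} ≤ ENNReal.ofReal α1) :
    -- f* is feasible, and its ambiguity is no larger than that of f
    (P[|{ω | Y ω = -1}] {ω | Y ω * fstar (X ω) < -ε} ≤ ENNReal.ofReal αm ∧
     P[|{ω | Y ω = 1}] {ω | Y ω * fstar (X ω) < -ε} ≤ ENNReal.ofReal α1) ∧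
    P {ω | |fstar (X ω)| ≤ ε} ≤ P {ω | |f (X ω)| ≤ ε} :=
  fstar_minimizes_ambiguity_general P X Y hX hY hYval η hη hη01 hreg αm α1 hαm hα1 tm t1 htm ht1
    ht1half hhalftm ε hε fstar hfstar f hf hfeasm hfeas1
end

section
/- (Rademacher complexity of a Hilbert-ball linear class, final step of the proof of Theorem 3.) Let H be a real inner product space, v_1, …, v_n ∈ H with ‖v_i‖ ≤ r for all i, and s ≥ 0. Then the average over all sign vectors σ ∈ {−1, 1}^n (uniform distribution) of sup over h with ‖h‖ ≤ s of (1/n)·Σ_{i=1}^n σ_i ⟨h, v_i⟩ is at most r·s/√n. -/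
open scoped RealInnerProductSpace

lemma sum_eps_mul_eps {n : ℕ} {i j : Fin n} (hij : i ≠ j) :
    ∑ σ : Fin n → Bool,
      (if σ i then (1 : ℝ) else -1) * (if σ j then (1 : ℝ) else -1) = 0 := by
  set f : (Fin n → Bool) → ℝ :=
    fun σ => (if σ i then (1 : ℝ) else -1) * (if σ j then (1 : ℝ) else -1) with hf
  have hinv : Function.Involutive
      (fun σ : Fin n → Bool => Function.update σ j (!σ j)) := by
    intro σ
    funext k
    by_cases hk : k = j <;> simp [Function.update, hk]
  have h1 : ∀ σ, f ((hinv.toPerm _) σ) = - f σ := by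
    intro σ
    simp only [hf, Function.Involutive.toPerm, Equiv.coe_fn_mk]
    rw [Function.update_of_ne hij, Function.update_self]
    cases σ j <;> cases σ i <;> norm_num
  have h0 := Equiv.sum_comp (hinv.toPerm _) f
  have h2 : ∑ σ : Fin n → Bool, f ((hinv.toPerm _) σ) = -∑ σ : Fin n → Bool, f σ := by
    rw [← Finset.sum_neg_distrib]
    exact Finset.sum_congr rfl fun σ _ => h1 σ
  linarith [h0, h2]

/-- Rademacher complexity of a Hilbert-ball linear class, final step of the
proof of Theorem 3: the empirical Rademacher complexity of the class
`{v ↦ ⟨h, v⟩ : ‖h‖ ≤ s}` on points `v₁, …, vₙ` of norm at most `r` is at most `r·s/√n`.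
Sign vectors `σ ∈ {−1,1}ⁿ` are encoded by `σ : Fin n → Bool` via `true ↦ 1`, `false ↦ −1`. -/
theorem empirical_rademacher_hilbert_ball
    {H : Type*} [NormedAddCommGroup H] [InnerProductSpace ℝ H]
    (n : ℕ) (hn : 0 < n) (v : Fin n → H) (r : ℝ) (hr : ∀ i, ‖v i‖ ≤ r)
    (s : ℝ) (hs : 0 ≤ s) :
    ((2 : ℝ) ^ n)⁻¹ *
        ∑ σ : Fin n → Bool,
          ⨆ h : {h : H // ‖h‖ ≤ s},
            (n : ℝ)⁻¹ * ∑ i : Fin n, (if σ i then (1 : ℝ) else -1) * ⟪h.1, v i⟫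
      ≤ r * s / Real.sqrt n := by
  have hr0 : 0 ≤ r := le_trans (norm_nonneg _) (hr ⟨0, hn⟩)
  set ε : (Fin n → Bool) → Fin n → ℝ := fun σ i => if σ i then (1 : ℝ) else -1 with hε
  set w : (Fin n → Bool) → H := fun σ => ∑ i : Fin n, ε σ i • v i with hw
  have hne : Nonempty {h : H // ‖h‖ ≤ s} := ⟨⟨0, by simpa using hs⟩⟩
  have hn' : (0 : ℝ) < n := by exact_mod_cast hn
  have h2n : (0 : ℝ) < 2 ^ n := by positivity
  have hsq : (0 : ℝ) < Real.sqrt n := Real.sqrt_pos.mpr hn'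
  have hnn : Real.sqrt n * Real.sqrt n = n := Real.mul_self_sqrt hn'.le
  -- Step A: bound each sup
  have stepA : ∀ σ : Fin n → Bool,
      (⨆ h : {h : H // ‖h‖ ≤ s},
        (n : ℝ)⁻¹ * ∑ i : Fin n, ε σ i * ⟪h.1, v i⟫) ≤ (n : ℝ)⁻¹ * (s * ‖w σ‖) := by
    intro σ
    apply ciSup_le
    intro h
    have hiw : ∑ i : Fin n, ε σ i * ⟪h.1, v i⟫ = ⟪h.1, w σ⟫ := by
      rw [hw, inner_sum]
      exact Finset.sum_congr rfl fun i _ => (real_inner_smul_right _ _ _).symm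
    rw [hiw]
    have h1 : ⟪h.1, w σ⟫ ≤ ‖h.1‖ * ‖w σ‖ := real_inner_le_norm _ _
    have h2 : ‖h.1‖ * ‖w σ‖ ≤ s * ‖w σ‖ :=
      mul_le_mul_of_nonneg_right h.2 (norm_nonneg _)
    exact mul_le_mul_of_nonneg_left (le_trans h1 h2) (by positivity)
  -- key combinatorial identity
  have key : ∀ i j : Fin n, ∑ σ : Fin n → Bool, ε σ i * ε σ j
      = if i = j then (2 : ℝ) ^ n else 0 := by
    intro i j
    by_cases hij : i = j
    · subst hij
      rw [if_pos rfl]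
      have hone : ∀ σ : Fin n → Bool, ε σ i * ε σ i = 1 := by
        intro σ; simp only [hε]; cases σ i <;> norm_num
      rw [Finset.sum_congr rfl fun σ _ => hone σ]
      simp [Finset.card_univ]
    · rw [if_neg hij]
      exact sum_eps_mul_eps hij
  -- Step B: sum of squared norms
  have stepB : ∑ σ : Fin n → Bool, ‖w σ‖ ^ 2 ≤ 2 ^ n * ((n : ℝ) * r ^ 2) := by
    have hw2 : ∀ σ, ‖w σ‖ ^ 2
        = ∑ i : Fin n, ∑ j : Fin n, ε σ i * ε σ j * ⟪v i, v j⟫ := by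
      intro σ
      rw [← real_inner_self_eq_norm_sq, hw, sum_inner]
      refine Finset.sum_congr rfl fun i _ => ?_
      rw [inner_sum]
      refine Finset.sum_congr rfl fun j _ => ?_
      rw [real_inner_smul_left, real_inner_smul_right]; ring
    calc ∑ σ : Fin n → Bool, ‖w σ‖ ^ 2
        = ∑ σ : Fin n → Bool, ∑ i : Fin n, ∑ j : Fin n, ε σ i * ε σ j * ⟪v i, v j⟫ :=
          Finset.sum_congr rfl fun σ _ => hw2 σ
      _ = ∑ i : Fin n, ∑ j : Fin n, ∑ σ : Fin n → Bool, ε σ i * ε σ j * ⟪v i, v j⟫ := by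
          rw [Finset.sum_comm]
          exact Finset.sum_congr rfl fun i _ => Finset.sum_comm
      _ = ∑ i : Fin n, ∑ j : Fin n, (if i = j then (2 : ℝ) ^ n else 0) * ⟪v i, v j⟫ := by
          refine Finset.sum_congr rfl fun i _ => Finset.sum_congr rfl fun j _ => ?_
          rw [← Finset.sum_mul, key]
      _ = ∑ i : Fin n, (2 : ℝ) ^ n * ‖v i‖ ^ 2 := by
          refine Finset.sum_congr rfl fun i _ => ?_
          simp [ite_mul, real_inner_self_eq_norm_sq]
      _ ≤ ∑ i : Fin n, (2 : ℝ) ^ n * r ^ 2 := by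
          refine Finset.sum_le_sum fun i _ => ?_
          exact mul_le_mul_of_nonneg_left
            (pow_le_pow_left₀ (norm_nonneg _) (hr i) 2) h2n.le
      _ = 2 ^ n * ((n : ℝ) * r ^ 2) := by
          rw [Finset.sum_const, Finset.card_univ]; simp; ring
  -- Cauchy–Schwarz on the average
  have hA : ∑ σ : Fin n → Bool, ‖w σ‖ ≤ 2 ^ n * (Real.sqrt n * r) := by
    have h1 : (∑ σ : Fin n → Bool, ‖w σ‖) ^ 2
        ≤ (2 : ℝ) ^ n * ∑ σ : Fin n → Bool, ‖w σ‖ ^ 2 := by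
      have := Finset.sum_mul_sq_le_sq_mul_sq Finset.univ
        (fun _ : Fin n → Bool => (1 : ℝ)) (fun σ => ‖w σ‖)
      simpa [Finset.card_univ] using this
    have h2 : (∑ σ : Fin n → Bool, ‖w σ‖) ^ 2 ≤ ((2 : ℝ) ^ n * (Real.sqrt n * r)) ^ 2 := by
      calc (∑ σ : Fin n → Bool, ‖w σ‖) ^ 2
          ≤ (2 : ℝ) ^ n * ∑ σ : Fin n → Bool, ‖w σ‖ ^ 2 := h1
        _ ≤ (2 : ℝ) ^ n * (2 ^ n * ((n : ℝ) * r ^ 2)) :=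
            mul_le_mul_of_nonneg_left stepB h2n.le
        _ = ((2 : ℝ) ^ n * (Real.sqrt n * r)) ^ 2 := by
            nlinarith [hnn]
    calc ∑ σ : Fin n → Bool, ‖w σ‖
        = Real.sqrt ((∑ σ : Fin n → Bool, ‖w σ‖) ^ 2) :=
          (Real.sqrt_sq (Finset.sum_nonneg fun σ _ => norm_nonneg _)).symm
      _ ≤ Real.sqrt (((2 : ℝ) ^ n * (Real.sqrt n * r)) ^ 2) := Real.sqrt_le_sqrt h2
      _ = 2 ^ n * (Real.sqrt n * r) := Real.sqrt_sq (by positivity)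
  -- assemble
  calc ((2 : ℝ) ^ n)⁻¹ *
        ∑ σ : Fin n → Bool,
          ⨆ h : {h : H // ‖h‖ ≤ s},
            (n : ℝ)⁻¹ * ∑ i : Fin n, ε σ i * ⟪h.1, v i⟫
      ≤ ((2 : ℝ) ^ n)⁻¹ * ∑ σ : Fin n → Bool, (n : ℝ)⁻¹ * (s * ‖w σ‖) :=
        mul_le_mul_of_nonneg_left (Finset.sum_le_sum fun σ _ => stepA σ)
          (inv_nonneg.mpr h2n.le)
    _ = (n : ℝ)⁻¹ * s * (((2 : ℝ) ^ n)⁻¹ * ∑ σ : Fin n → Bool, ‖w σ‖) := by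
        rw [← Finset.mul_sum, ← Finset.mul_sum]; ring
    _ ≤ (n : ℝ)⁻¹ * s * (((2 : ℝ) ^ n)⁻¹ * (2 ^ n * (Real.sqrt n * r))) := by
        refine mul_le_mul_of_nonneg_left ?_ (by positivity)
        exact mul_le_mul_of_nonneg_left hA (inv_nonneg.mpr h2n.le)
    _ = r * s / Real.sqrt n := by
        rw [inv_mul_cancel_left₀ h2n.ne', eq_div_iff hsq.ne']
        field_simp
        linear_combination s * r * hnn
end

section
/- (Lemma 7, convexity of the optimal value function.) The function γ_s : [0,1]² → ℝ defined by γ_s(α_{−1}, α_1) = inf{ E[max(0, 1 + ε − Y f(X))] : f(x) = ⟨h, Φ(x)⟩ + b with h ∈ H, ‖h‖ ≤ s, b ∈ ℝ, ε ≥ 0, and E[max(0, 1 − ε − Y f(X)) | Y = j] ≤ α_j for j = ±1 } is convex on [0,1]². -/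
open MeasureTheory ProbabilityTheory
open scoped RealInnerProductSpace

/-- Joint convexity of `max 0` along convex combinations. -/
lemma aux_max_convex {t1 t2 u v : ℝ} (h1 : 0 ≤ t1) (h2 : 0 ≤ t2) :
    max 0 (t1 * u + t2 * v) ≤ t1 * max 0 u + t2 * max 0 v := by
  have hu := le_max_right (0:ℝ) u
  have hv := le_max_right (0:ℝ) v
  have hu0 := le_max_left (0:ℝ) u
  have hv0 := le_max_left (0:ℝ) v
  refine max_le (by positivity) ?_
  have := mul_le_mul_of_nonneg_left hu h1
  have := mul_le_mul_of_nonneg_left hv h2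
  linarith

/-- Positive homogeneity of `max 0`. -/
lemma aux_smul_max {t : ℝ} (ht : 0 ≤ t) (u : ℝ) : max 0 (t * u) = t * max 0 u := by
  rcases le_total u 0 with h | h
  · rw [max_eq_left (mul_nonpos_of_nonneg_of_nonpos ht h), max_eq_left h, mul_zero]
  · rw [max_eq_right (mul_nonneg ht h), max_eq_right h]

lemma aux_le_max {t c : ℝ} (ht : 0 ≤ t) (hc : 0 ≤ c) (u : ℝ) :
    t * max 0 u ≤ max 0 (c + t * u) := by
  rcases le_total u 0 with h | h
  · rw [max_eq_left h, mul_zero]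
    exact le_max_left _ _
  · rw [max_eq_right h]
    exact le_trans (by nlinarith) (le_max_right _ _)

/-- Integrability transfers to conditional measures. -/
lemma aux_integrable_cond {Ω : Type*} [MeasurableSpace Ω] {P : Measure Ω} {f : Ω → ℝ}
    {s : Set Ω} (hf : Integrable f P) (hs : P s ≠ 0) : Integrable f (P[|s]) := by
  rw [ProbabilityTheory.cond]
  exact (hf.restrict).smul_measure (ENNReal.inv_ne_top.mpr hs)

/-- Lemma 7, convexity of the optimal value function: the function `γ_s(α₋₁, α₁)`, the optimal ε-hinge risk over `f(x) = ⟨h, Φ(x)⟩ + b` with `‖h‖ ≤ s`, `ε ≥ 0` and surrogate class-conditional noncoverage constraints at levels `(α₋₁, α₁)`, is convex on `[0,1]²`. -/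
theorem gamma_convexOn
    {𝒳 : Type*} [MeasurableSpace 𝒳]
    {Ω : Type*} [MeasurableSpace Ω] (P : Measure Ω) [IsProbabilityMeasure P]
    (X : Ω → 𝒳) (Y : Ω → ℝ) (hX : Measurable X) (hY : Measurable Y)
    (hYval : ∀ ω, Y ω = 1 ∨ Y ω = -1)
    (hpos1 : 0 < P {ω | Y ω = 1}) (hposm : 0 < P {ω | Y ω = -1})
    {H : Type*} [NormedAddCommGroup H] [InnerProductSpace ℝ H]
    [MeasurableSpace H] [BorelSpace H]
    (Φ : 𝒳 → H) (hΦ : Measurable Φ) (s : ℝ) (hs : 0 < s)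
    -- the optimal value function γ_s of the surrogate-constrained problem
    (γ : ℝ × ℝ → ℝ)
    (hγ : ∀ a : ℝ × ℝ, γ a = sInf {z : ℝ |
      ∃ (h : H) (b ε : ℝ), ‖h‖ ≤ s ∧ 0 ≤ ε ∧
        (∫ ω, max 0 (1 - ε - Y ω * (⟪h, Φ (X ω)⟫ + b)) ∂(P[|{ω | Y ω = -1}])) ≤ a.1 ∧
        (∫ ω, max 0 (1 - ε - Y ω * (⟪h, Φ (X ω)⟫ + b)) ∂(P[|{ω | Y ω = 1}])) ≤ a.2 ∧
        z = ∫ ω, max 0 (1 + ε - Y ω * (⟪h, Φ (X ω)⟫ + b)) ∂P}) :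
    ConvexOn ℝ (Set.Icc ((0 : ℝ), (0 : ℝ)) (1, 1)) γ := by
  classical
  set S : ℝ × ℝ → Set ℝ := fun a => {z : ℝ |
      ∃ (h : H) (b ε : ℝ), ‖h‖ ≤ s ∧ 0 ≤ ε ∧
        (∫ ω, max 0 (1 - ε - Y ω * (⟪h, Φ (X ω)⟫ + b)) ∂(P[|{ω | Y ω = -1}])) ≤ a.1 ∧
        (∫ ω, max 0 (1 - ε - Y ω * (⟪h, Φ (X ω)⟫ + b)) ∂(P[|{ω | Y ω = 1}])) ≤ a.2 ∧
        z = ∫ ω, max 0 (1 + ε - Y ω * (⟪h, Φ (X ω)⟫ + b)) ∂P} with hSdef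
  have hγS : ∀ a, γ a = sInf (S a) := hγ
  -- measurability of the basic integrands
  have hmeasI : ∀ h : H, Measurable fun ω => (⟪h, Φ (X ω)⟫ : ℝ) := by
    intro h
    have hc : Continuous fun v : H => (⟪h, v⟫ : ℝ) := continuous_const.inner continuous_id
    exact hc.measurable.comp (hΦ.comp hX)
  have hmeas : ∀ (h : H) (b c : ℝ),
      Measurable fun ω => max 0 (c - Y ω * (⟪h, Φ (X ω)⟫ + b)) := by
    intro h b c
    exact measurable_const.max (measurable_const.sub (hY.mul ((hmeasI h).add_const b)))
  -- every element of S a is nonnegative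
  have hz_nonneg : ∀ (a : ℝ × ℝ), ∀ z ∈ S a, 0 ≤ z := by
    rintro a z ⟨h, b, ε, -, -, -, -, rfl⟩
    exact integral_nonneg fun ω => le_max_left _ _
  have hbdd : ∀ a : ℝ × ℝ, BddBelow (S a) := fun a => ⟨0, fun z hz => hz_nonneg a z hz⟩
  -- nonemptiness of S a for a in the square
  have hne : ∀ a ∈ Set.Icc ((0:ℝ), (0:ℝ)) (1, 1), (S a).Nonempty := by
    rintro a ⟨ha0, ha1⟩
    refine ⟨2, 0, 0, 1, by simpa using hs.le, zero_le_one, ?_, ?_, ?_⟩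
    · simpa using ha0.1
    · simpa using ha0.2
    · simp only [inner_zero_left, zero_add, mul_zero, sub_zero]
      norm_num
  -- key inequality, case of a non-integrable objective at the first witness
  have keyA : ∀ (a a' : ℝ × ℝ), 0 ≤ a'.1 → 0 ≤ a'.2 →
      ∀ t1 t2 : ℝ, 0 < t1 → 0 < t2 → t1 + t2 = 1 →
      ∀ (h1 : H) (b1 ε1 : ℝ), ‖h1‖ ≤ s → 0 ≤ ε1 →
      (∫ ω, max 0 (1 - ε1 - Y ω * (⟪h1, Φ (X ω)⟫ + b1)) ∂(P[|{ω | Y ω = -1}])) ≤ a.1 →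
      (∫ ω, max 0 (1 - ε1 - Y ω * (⟪h1, Φ (X ω)⟫ + b1)) ∂(P[|{ω | Y ω = 1}])) ≤ a.2 →
      ¬ Integrable (fun ω => max 0 (1 + ε1 - Y ω * (⟪h1, Φ (X ω)⟫ + b1))) P →
      γ (t1 • a + t2 • a') ≤ 0 := by
    intro a a' ha'1 ha'2 t1 t2 ht1 ht2 hsum h1 b1 ε1 hn1 hε1 hc1m hc1p hnotint
    have ht1le : t1 ≤ 1 := by linarith
    -- the scaled point (t1 • h1, t1*b1, 1 - t1 + t1*ε1)
    set ε' : ℝ := 1 - t1 + t1 * ε1 with hε'def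
    have hε' : 0 ≤ ε' := by nlinarith
    -- pointwise identity for the constraint integrand
    have hconstr_eq : ∀ ω, max 0 (1 - ε' - Y ω * (⟪t1 • h1, Φ (X ω)⟫ + t1 * b1))
        = t1 * max 0 (1 - ε1 - Y ω * (⟪h1, Φ (X ω)⟫ + b1)) := by
      intro ω
      rw [real_inner_smul_left]
      rw [show (1 - ε' - Y ω * (t1 * ⟪h1, Φ (X ω)⟫ + t1 * b1))
          = t1 * (1 - ε1 - Y ω * (⟪h1, Φ (X ω)⟫ + b1)) by rw [hε'def]; ring]
      exact aux_smul_max ht1.le _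
    -- the new objective integrand dominates `t1 * (old objective)`, hence non-integrable
    have hobj_ge : ∀ ω, t1 * max 0 (1 + ε1 - Y ω * (⟪h1, Φ (X ω)⟫ + b1))
        ≤ max 0 (1 + ε' - Y ω * (⟪t1 • h1, Φ (X ω)⟫ + t1 * b1)) := by
      intro ω
      rw [real_inner_smul_left]
      rw [show (1 + ε' - Y ω * (t1 * ⟪h1, Φ (X ω)⟫ + t1 * b1))
          = 2 * (1 - t1) + t1 * (1 + ε1 - Y ω * (⟪h1, Φ (X ω)⟫ + b1)) by rw [hε'def]; ring]
      exact aux_le_max ht1.le (by linarith) _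
    have hnotint' : ¬ Integrable
        (fun ω => max 0 (1 + ε' - Y ω * (⟪t1 • h1, Φ (X ω)⟫ + t1 * b1))) P := by
      intro hint
      apply hnotint
      refine Integrable.mono' (hint.const_mul t1⁻¹) ((hmeas h1 b1 (1 + ε1)).aestronglyMeasurable)
        (Filter.Eventually.of_forall fun ω => ?_)
      rw [Real.norm_of_nonneg (le_max_left _ _)]
      have h := hobj_ge ω
      rw [show max 0 (1 + ε1 - Y ω * (⟪h1, Φ (X ω)⟫ + b1))
          = t1⁻¹ * (t1 * max 0 (1 + ε1 - Y ω * (⟪h1, Φ (X ω)⟫ + b1))) by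
        field_simp]
      exact mul_le_mul_of_nonneg_left h (by positivity)
    -- membership of the (zero) objective value
    have hmem : (∫ ω, max 0 (1 + ε' - Y ω * (⟪t1 • h1, Φ (X ω)⟫ + t1 * b1)) ∂P)
        ∈ S (t1 • a + t2 • a') := by
      refine ⟨t1 • h1, t1 * b1, ε', ?_, hε', ?_, ?_, rfl⟩
      · rw [norm_smul, Real.norm_of_nonneg ht1.le]
        nlinarith
      · rw [integral_congr_ae (Filter.Eventually.of_forall hconstr_eq), integral_const_mul]
        have : t1 * (∫ ω, max 0 (1 - ε1 - Y ω * (⟪h1, Φ (X ω)⟫ + b1)) ∂(P[|{ω | Y ω = -1}]))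
            ≤ t1 * a.1 := mul_le_mul_of_nonneg_left hc1m ht1.le
        have hfst : (t1 • a + t2 • a').1 = t1 * a.1 + t2 * a'.1 := rfl
        rw [hfst]
        nlinarith
      · rw [integral_congr_ae (Filter.Eventually.of_forall hconstr_eq), integral_const_mul]
        have : t1 * (∫ ω, max 0 (1 - ε1 - Y ω * (⟪h1, Φ (X ω)⟫ + b1)) ∂(P[|{ω | Y ω = 1}]))
            ≤ t1 * a.2 := mul_le_mul_of_nonneg_left hc1p ht1.le
        have hsnd : (t1 • a + t2 • a').2 = t1 * a.2 + t2 * a'.2 := rfl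
        rw [hsnd]
        nlinarith
    have := csInf_le (hbdd _) hmem
    rw [← hγS] at this
    rwa [integral_undef hnotint'] at this
  -- key inequality: convex combination of feasible values is achievable
  have key : ∀ (a a' : ℝ × ℝ), a ∈ Set.Icc ((0:ℝ), (0:ℝ)) (1, 1) →
      a' ∈ Set.Icc ((0:ℝ), (0:ℝ)) (1, 1) →
      ∀ t1 t2 : ℝ, 0 < t1 → 0 < t2 → t1 + t2 = 1 →
      ∀ z1 ∈ S a, ∀ z2 ∈ S a', γ (t1 • a + t2 • a') ≤ t1 * z1 + t2 * z2 := by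
    intro a a' ha ha' t1 t2 ht1 ht2 hsum z1 hz1 z2 hz2
    obtain ⟨h1, b1, ε1, hn1, hε1, hc1m, hc1p, hz1e⟩ := hz1
    obtain ⟨h2, b2, ε2, hn2, hε2, hc2m, hc2p, hz2e⟩ := hz2
    have hz1nn : 0 ≤ z1 := hz1e ▸ integral_nonneg fun ω => le_max_left _ _
    have hz2nn : 0 ≤ z2 := hz2e ▸ integral_nonneg fun ω => le_max_left _ _
    by_cases H1 : Integrable (fun ω => max 0 (1 + ε1 - Y ω * (⟪h1, Φ (X ω)⟫ + b1))) P
    · by_cases H2 : Integrable (fun ω => max 0 (1 + ε2 - Y ω * (⟪h2, Φ (X ω)⟫ + b2))) P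
      · -- both objectives integrable: take the convex combination of the witnesses
        set ht : H := t1 • h1 + t2 • h2 with htdef
        set bt : ℝ := t1 * b1 + t2 * b2 with btdef
        set εt : ℝ := t1 * ε1 + t2 * ε2 with εtdef
        have hid : ∀ (c : ℝ) ω, c - εt - Y ω * (⟪ht, Φ (X ω)⟫ + bt)
            = t1 * (c - ε1 - Y ω * (⟪h1, Φ (X ω)⟫ + b1))
              + t2 * (c - ε2 - Y ω * (⟪h2, Φ (X ω)⟫ + b2)) := by
          intro c ω
          rw [htdef, inner_add_left, real_inner_smul_left, real_inner_smul_left, btdef, εtdef]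
          have : t2 = 1 - t1 := by linarith
          rw [this]; ring
        have hidp : ∀ (c : ℝ) ω, c + εt - Y ω * (⟪ht, Φ (X ω)⟫ + bt)
            = t1 * (c + ε1 - Y ω * (⟪h1, Φ (X ω)⟫ + b1))
              + t2 * (c + ε2 - Y ω * (⟪h2, Φ (X ω)⟫ + b2)) := by
          intro c ω
          rw [htdef, inner_add_left, real_inner_smul_left, real_inner_smul_left, btdef, εtdef]
          have : t2 = 1 - t1 := by linarith
          rw [this]; ring
        -- pointwise convexity bounds
        have hcb : ∀ ω, max 0 (1 - εt - Y ω * (⟪ht, Φ (X ω)⟫ + bt))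
            ≤ t1 * max 0 (1 - ε1 - Y ω * (⟪h1, Φ (X ω)⟫ + b1))
              + t2 * max 0 (1 - ε2 - Y ω * (⟪h2, Φ (X ω)⟫ + b2)) := by
          intro ω
          rw [hid 1 ω]
          exact aux_max_convex ht1.le ht2.le
        have hob : ∀ ω, max 0 (1 + εt - Y ω * (⟪ht, Φ (X ω)⟫ + bt))
            ≤ t1 * max 0 (1 + ε1 - Y ω * (⟪h1, Φ (X ω)⟫ + b1))
              + t2 * max 0 (1 + ε2 - Y ω * (⟪h2, Φ (X ω)⟫ + b2)) := by
          intro ω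
          rw [hidp 1 ω]
          exact aux_max_convex ht1.le ht2.le
        -- constraint integrands are integrable (dominated by the objectives)
        have hgint : ∀ (h : H) (b ε : ℝ), 0 ≤ ε →
            Integrable (fun ω => max 0 (1 + ε - Y ω * (⟪h, Φ (X ω)⟫ + b))) P →
            ∀ (A : Set Ω), P A ≠ 0 →
            Integrable (fun ω => max 0 (1 - ε - Y ω * (⟪h, Φ (X ω)⟫ + b))) (P[|A]) := by
          intro h b ε hε hint A hA
          refine aux_integrable_cond ?_ hA
          refine Integrable.mono' hint ((hmeas h b (1 - ε)).aestronglyMeasurable)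
            (Filter.Eventually.of_forall fun ω => ?_)
          rw [Real.norm_of_nonneg (le_max_left _ _)]
          exact max_le_max le_rfl (by linarith)
        have hg1m := hgint h1 b1 ε1 hε1 H1 _ hposm.ne'
        have hg1p := hgint h1 b1 ε1 hε1 H1 _ hpos1.ne'
        have hg2m := hgint h2 b2 ε2 hε2 H2 _ hposm.ne'
        have hg2p := hgint h2 b2 ε2 hε2 H2 _ hpos1.ne'
        -- bound the constraint integrals of the combination
        have hconstr : ∀ (A : Set Ω) (α β : ℝ),
            Integrable (fun ω => max 0 (1 - ε1 - Y ω * (⟪h1, Φ (X ω)⟫ + b1))) (P[|A]) →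
            Integrable (fun ω => max 0 (1 - ε2 - Y ω * (⟪h2, Φ (X ω)⟫ + b2))) (P[|A]) →
            (∫ ω, max 0 (1 - ε1 - Y ω * (⟪h1, Φ (X ω)⟫ + b1)) ∂(P[|A])) ≤ α →
            (∫ ω, max 0 (1 - ε2 - Y ω * (⟪h2, Φ (X ω)⟫ + b2)) ∂(P[|A])) ≤ β →
            (∫ ω, max 0 (1 - εt - Y ω * (⟪ht, Φ (X ω)⟫ + bt)) ∂(P[|A])) ≤ t1 * α + t2 * β := by
          intro A α β hi1 hi2 hb1 hb2
          have hmono : (∫ ω, max 0 (1 - εt - Y ω * (⟪ht, Φ (X ω)⟫ + bt)) ∂(P[|A]))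
              ≤ ∫ ω, (t1 * max 0 (1 - ε1 - Y ω * (⟪h1, Φ (X ω)⟫ + b1))
                + t2 * max 0 (1 - ε2 - Y ω * (⟪h2, Φ (X ω)⟫ + b2))) ∂(P[|A]) := by
            refine integral_mono_of_nonneg
              (Filter.Eventually.of_forall fun ω => le_max_left _ _)
              ((hi1.const_mul t1).add (hi2.const_mul t2))
              (Filter.Eventually.of_forall hcb)
          rw [integral_add (hi1.const_mul t1) (hi2.const_mul t2),
            integral_const_mul, integral_const_mul] at hmono
          have := mul_le_mul_of_nonneg_left hb1 ht1.le
          have := mul_le_mul_of_nonneg_left hb2 ht2.le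
          linarith
        -- membership of the combined objective value
        have hmem : (∫ ω, max 0 (1 + εt - Y ω * (⟪ht, Φ (X ω)⟫ + bt)) ∂P)
            ∈ S (t1 • a + t2 • a') := by
          refine ⟨ht, bt, εt, ?_, by positivity, ?_, ?_, rfl⟩
          · calc ‖ht‖ ≤ ‖t1 • h1‖ + ‖t2 • h2‖ := norm_add_le _ _
              _ = t1 * ‖h1‖ + t2 * ‖h2‖ := by
                  rw [norm_smul, norm_smul, Real.norm_of_nonneg ht1.le,
                    Real.norm_of_nonneg ht2.le]
              _ ≤ t1 * s + t2 * s := by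
                  have := mul_le_mul_of_nonneg_left hn1 ht1.le
                  have := mul_le_mul_of_nonneg_left hn2 ht2.le
                  linarith
              _ = s := by rw [← add_mul, hsum, one_mul]
          · have hfst : (t1 • a + t2 • a').1 = t1 * a.1 + t2 * a'.1 := rfl
            rw [hfst]
            exact hconstr _ _ _ hg1m hg2m hc1m hc2m
          · have hsnd : (t1 • a + t2 • a').2 = t1 * a.2 + t2 * a'.2 := rfl
            rw [hsnd]
            exact hconstr _ _ _ hg1p hg2p hc1p hc2p
        have hle := csInf_le (hbdd _) hmem
        rw [← hγS] at hle
        refine le_trans hle ?_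
        have hmono : (∫ ω, max 0 (1 + εt - Y ω * (⟪ht, Φ (X ω)⟫ + bt)) ∂P)
            ≤ ∫ ω, (t1 * max 0 (1 + ε1 - Y ω * (⟪h1, Φ (X ω)⟫ + b1))
              + t2 * max 0 (1 + ε2 - Y ω * (⟪h2, Φ (X ω)⟫ + b2))) ∂P := by
          refine integral_mono_of_nonneg
            (Filter.Eventually.of_forall fun ω => le_max_left _ _)
            ((H1.const_mul t1).add (H2.const_mul t2))
            (Filter.Eventually.of_forall hob)
        rw [integral_add (H1.const_mul t1) (H2.const_mul t2),
          integral_const_mul, integral_const_mul] at hmono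
        rw [hz1e, hz2e]
        exact hmono
      · -- second objective non-integrable
        have hz2z : z2 = 0 := by rw [hz2e, integral_undef H2]
        have hcomm : t1 • a + t2 • a' = t2 • a' + t1 • a := by rw [add_comm]
        have := keyA a' a ha.1.1 ha.1.2 t2 t1 ht2 ht1 (by linarith) h2 b2 ε2 hn2 hε2 hc2m hc2p H2
        rw [← hcomm] at this
        have : γ (t1 • a + t2 • a') ≤ 0 := this
        nlinarith
    · -- first objective non-integrable
      have hz1z : z1 = 0 := by rw [hz1e, integral_undef H1]
      have := keyA a a' ha'.1.1 ha'.1.2 t1 t2 ht1 ht2 hsum h1 b1 ε1 hn1 hε1 hc1m hc1p H1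
      nlinarith
  -- assemble convexity
  constructor
  · rw [show Set.Icc ((0:ℝ), (0:ℝ)) (1, 1)
        = Set.Icc (0:ℝ) 1 ×ˢ Set.Icc (0:ℝ) 1 by rw [← Set.Icc_prod_Icc]]
    exact (convex_Icc _ _).prod (convex_Icc _ _)
  · intro x hx y hy t1 t2 ht1 ht2 hsum
    rcases eq_or_lt_of_le ht1 with h1 | h1
    · have ht2' : t2 = 1 := by linarith
      simp [← h1, ht2']
    rcases eq_or_lt_of_le ht2 with h2 | h2
    · have ht1' : t1 = 1 := by linarith
      simp [← h2, ht1']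
    -- both weights positive
    have step1 : ∀ z2 ∈ S y, γ (t1 • x + t2 • y) ≤ t1 * γ x + t2 * z2 := by
      intro z2 hz2
      have hlb : ∀ z1 ∈ S x, (γ (t1 • x + t2 • y) - t2 * z2) / t1 ≤ z1 := by
        intro z1 hz1
        rw [div_le_iff₀ h1]
        have := key x y hx hy t1 t2 h1 h2 hsum z1 hz1 z2 hz2
        nlinarith
      have := le_csInf (hne x hx) hlb
      rw [← hγS, div_le_iff₀ h1] at this
      nlinarith
    have hlb2 : ∀ z2 ∈ S y, (γ (t1 • x + t2 • y) - t1 * γ x) / t2 ≤ z2 := by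
      intro z2 hz2
      rw [div_le_iff₀ h2]
      have := step1 z2 hz2
      nlinarith
    have := le_csInf (hne y hy) hlb2
    rw [← hγS, div_le_iff₀ h2] at this
    have : γ (t1 • x + t2 • y) ≤ t1 * γ x + t2 * γ y := by nlinarith
    simpa [smul_eq_mul] using this
end

section
/- (Subgradient chain inequality, proof of Theorem 4.) Let γ : ℝ² → ℝ be convex on [0,1]² and coordinatewise nonincreasing on [0,1]². Let α = (α_1, α_2) and ν = (ν_1, ν_2) satisfy 0 < ν_j < α_j < 1 for j = 1, 2. Then γ(α − ν) − γ(α) ≤ (γ(0,0) − γ(α − ν)) · max_j ( ν_j / (α_j − ν_j) ). -/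
/-- subgradient chain inequality, proof of Theorem 4: if `γ` is convex and
coordinatewise nonincreasing on `[0,1]²` and `0 < νⱼ < αⱼ < 1`, then
`γ(α − ν) − γ(α) ≤ (γ(0,0) − γ(α − ν)) · max_j νⱼ/(αⱼ − νⱼ)`. -/
theorem subgradient_chain_inequality
    (γ : ℝ × ℝ → ℝ)
    (hconv : ConvexOn ℝ (Set.Icc ((0 : ℝ), (0 : ℝ)) (1, 1)) γ)
    (hmono : ∀ u v : ℝ × ℝ, u ∈ Set.Icc ((0 : ℝ), (0 : ℝ)) (1, 1) →
      v ∈ Set.Icc ((0 : ℝ), (0 : ℝ)) (1, 1) → u.1 ≤ v.1 → u.2 ≤ v.2 → γ v ≤ γ u)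
    (α ν : ℝ × ℝ)
    (hν1 : 0 < ν.1) (hν2 : 0 < ν.2) (hαν1 : ν.1 < α.1) (hαν2 : ν.2 < α.2)
    (hα1 : α.1 < 1) (hα2 : α.2 < 1) :
    γ (α - ν) - γ α ≤ (γ (0, 0) - γ (α - ν)) *
      max (ν.1 / (α.1 - ν.1)) (ν.2 / (α.2 - ν.2)) := by
  have hmem : ∀ p : ℝ × ℝ, 0 ≤ p.1 → p.1 ≤ 1 → 0 ≤ p.2 → p.2 ≤ 1 →
      p ∈ Set.Icc ((0 : ℝ), (0 : ℝ)) (1, 1) := by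
    intro p h1 h2 h3 h4
    simp [Set.mem_Icc, Prod.le_def, h1, h2, h3, h4]
  have hβ1pos : 0 < α.1 - ν.1 := by linarith
  have hβ2pos : 0 < α.2 - ν.2 := by linarith
  set t := max (ν.1 / (α.1 - ν.1)) (ν.2 / (α.2 - ν.2)) with ht
  have ht1 : ν.1 / (α.1 - ν.1) ≤ t := le_max_left _ _
  have ht2 : ν.2 / (α.2 - ν.2) ≤ t := le_max_right _ _
  have htpos : 0 < t := lt_of_lt_of_le (div_pos hν1 hβ1pos) ht1
  have h1t : (0 : ℝ) < 1 + t := by linarith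
  set q : ℝ × ℝ := (α.1 - ν.1 - ν.1 / t, α.2 - ν.2 - ν.2 / t) with hqdef
  have hq1 : 0 ≤ q.1 := by
    have h := (div_le_iff₀ hβ1pos).mp ht1
    have : ν.1 / t ≤ α.1 - ν.1 := by
      rw [div_le_iff₀ htpos]; nlinarith
    simp only [hqdef]; linarith
  have hq2 : 0 ≤ q.2 := by
    have h := (div_le_iff₀ hβ2pos).mp ht2
    have : ν.2 / t ≤ α.2 - ν.2 := by
      rw [div_le_iff₀ htpos]; nlinarith
    simp only [hqdef]; linarith
  have hq1' : q.1 ≤ 1 := by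
    have : 0 < ν.1 / t := div_pos hν1 htpos
    simp only [hqdef]; linarith
  have hq2' : q.2 ≤ 1 := by
    have : 0 < ν.2 / t := div_pos hν2 htpos
    simp only [hqdef]; linarith
  have hqmem : q ∈ Set.Icc ((0 : ℝ), (0 : ℝ)) (1, 1) := hmem q hq1 hq1' hq2 hq2'
  have hαmem : α ∈ Set.Icc ((0 : ℝ), (0 : ℝ)) (1, 1) :=
    hmem α (by linarith) (by linarith) (by linarith) (by linarith)
  have h00mem : ((0 : ℝ), (0 : ℝ)) ∈ Set.Icc ((0 : ℝ), (0 : ℝ)) (1, 1) :=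
    hmem _ le_rfl zero_le_one le_rfl zero_le_one
  have ha : (0 : ℝ) ≤ t / (1 + t) := by positivity
  have hb : (0 : ℝ) ≤ 1 / (1 + t) := by positivity
  have hab : t / (1 + t) + 1 / (1 + t) = 1 := by field_simp; ring
  have hkey := hconv.2 hqmem hαmem ha hb hab
  have hcomb : (t / (1 + t)) • q + (1 / (1 + t)) • α = α - ν := by
    have htne : t ≠ 0 := ne_of_gt htpos
    have h1tne : (1 : ℝ) + t ≠ 0 := ne_of_gt h1t
    refine Prod.ext ?_ ?_ <;>
      simp only [hqdef, Prod.fst_add, Prod.snd_add, Prod.smul_fst, Prod.smul_snd,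
        Prod.fst_sub, Prod.snd_sub, smul_eq_mul] <;>
      field_simp <;> try ring
  rw [hcomb] at hkey
  have hq0 : γ q ≤ γ (0, 0) := hmono (0, 0) q h00mem hqmem hq1 hq2
  have hkey' : (1 + t) * γ (α - ν) ≤ t * γ q + γ α := by
    have h := mul_le_mul_of_nonneg_left hkey h1t.le
    calc (1 + t) * γ (α - ν)
        ≤ (1 + t) * (t / (1 + t) * γ q + 1 / (1 + t) * γ α) := h
      _ = t * γ q + γ α := by field_simp
  nlinarith [mul_le_mul_of_nonneg_left hq0 htpos.le, hkey']
end

section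
/- (Bound on the constraint-relaxation term A₃, proof of Theorem 4.) Let γ : ℝ² → ℝ be convex on [0,1]² and coordinatewise nonincreasing on [0,1]². Let α = (α_1, α_2) and ν = (ν_1, ν_2) satisfy 0 < ν_j ≤ α_j/2 and α_j < 1 for j = 1, 2, and suppose γ(0,0) − γ(α − ν) ≤ 1. Then γ(α − ν) − γ(α) ≤ 2·max{ν_1, ν_2} / min{α_1, α_2}. In particular, with ν_j = κ/√(n_j) and κ/√(n_j) ≤ α_j/2 this gives γ(α − ν) − γ(α) ≤ 2κ / ( min{α_1, α_2} · min{√(n_1), √(n_2)} ). -/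
/-- bound on the constraint-relaxation term A₃, proof of Theorem 4: if `γ`
is convex and coordinatewise nonincreasing on `[0,1]²`, `0 < νⱼ ≤ αⱼ/2`, `αⱼ < 1` and
`γ(0,0) − γ(α − ν) ≤ 1`, then `γ(α − ν) − γ(α) ≤ 2·max{ν₁, ν₂}/min{α₁, α₂}`; in
particular, with `νⱼ = κ/√nⱼ` this gives
`γ(α − ν) − γ(α) ≤ 2κ/(min{α₁, α₂}·min{√n₁, √n₂})`. -/
theorem constraint_relaxation_bound
    (γ : ℝ × ℝ → ℝ)
    (hconv : ConvexOn ℝ (Set.Icc ((0 : ℝ), (0 : ℝ)) (1, 1)) γ)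
    (hmono : ∀ u v : ℝ × ℝ, u ∈ Set.Icc ((0 : ℝ), (0 : ℝ)) (1, 1) →
      v ∈ Set.Icc ((0 : ℝ), (0 : ℝ)) (1, 1) → u.1 ≤ v.1 → u.2 ≤ v.2 → γ v ≤ γ u)
    (α ν : ℝ × ℝ)
    (hν1 : 0 < ν.1) (hν2 : 0 < ν.2) (hαν1 : ν.1 ≤ α.1 / 2) (hαν2 : ν.2 ≤ α.2 / 2)
    (hα1 : α.1 < 1) (hα2 : α.2 < 1)
    (hval : γ (0, 0) - γ (α - ν) ≤ 1) :
    γ (α - ν) - γ α ≤ 2 * max ν.1 ν.2 / min α.1 α.2 ∧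
      ∀ (κ : ℝ) (n₁ n₂ : ℕ), 0 < κ → 0 < n₁ → 0 < n₂ →
        ν.1 = κ / Real.sqrt n₁ → ν.2 = κ / Real.sqrt n₂ →
        γ (α - ν) - γ α ≤
          2 * κ / (min α.1 α.2 * min (Real.sqrt n₁) (Real.sqrt n₂)) := by
  have hα1pos : 0 < α.1 := by linarith
  have hα2pos : 0 < α.2 := by linarith
  have hmα : 0 < min α.1 α.2 := lt_min hα1pos hα2pos
  have hmν : 0 < max ν.1 ν.2 := lt_of_lt_of_le hν1 (le_max_left _ _)
  set θ : ℝ := min (max ν.1 ν.2 / min α.1 α.2) (1 / 2) with hθdef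
  have hθpos : 0 < θ := lt_min (div_pos hmν hmα) (by norm_num)
  have hθhalf : θ ≤ 1 / 2 := min_le_right _ _
  have hθν1 : ν.1 ≤ θ * α.1 := by
    have h1 : ν.1 ≤ (max ν.1 ν.2 / min α.1 α.2) * α.1 := by
      rw [div_mul_eq_mul_div, le_div_iff₀ hmα]
      have := min_le_left α.1 α.2
      have := le_max_left ν.1 ν.2
      nlinarith
    have h2 : ν.1 ≤ (1 / 2) * α.1 := by linarith
    rcases min_cases (max ν.1 ν.2 / min α.1 α.2) (1 / 2) with ⟨h, _⟩ | ⟨h, _⟩ <;>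
      rw [hθdef, h] <;> assumption
  have hθν2 : ν.2 ≤ θ * α.2 := by
    have h1 : ν.2 ≤ (max ν.1 ν.2 / min α.1 α.2) * α.2 := by
      rw [div_mul_eq_mul_div, le_div_iff₀ hmα]
      have := min_le_right α.1 α.2
      have := le_max_right ν.1 ν.2
      nlinarith
    have h2 : ν.2 ≤ (1 / 2) * α.2 := by linarith
    rcases min_cases (max ν.1 ν.2 / min α.1 α.2) (1 / 2) with ⟨h, _⟩ | ⟨h, _⟩ <;>
      rw [hθdef, h] <;> assumption
  -- membership facts
  have hmem0 : ((0 : ℝ), (0 : ℝ)) ∈ Set.Icc ((0 : ℝ), (0 : ℝ)) (1, 1) := by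
    constructor <;> constructor <;> norm_num
  have hmemα : α ∈ Set.Icc ((0 : ℝ), (0 : ℝ)) (1, 1) := by
    constructor <;> constructor <;> simp <;> linarith
  have hmemαν : α - ν ∈ Set.Icc ((0 : ℝ), (0 : ℝ)) (1, 1) := by
    constructor <;> constructor <;> simp [Prod.fst_sub, Prod.snd_sub] <;> linarith
  have hmemu : ((1 - θ) • α + θ • ((0 : ℝ), (0 : ℝ))) ∈
      Set.Icc ((0 : ℝ), (0 : ℝ)) (1, 1) := by
    constructor <;> constructor <;>
      simp [Prod.smul_fst, Prod.smul_snd, smul_eq_mul] <;> nlinarith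
  -- convexity
  have hcvx := hconv.2 hmemα hmem0 (by linarith : (0:ℝ) ≤ 1 - θ) (le_of_lt hθpos)
    (by ring : (1 - θ) + θ = 1)
  -- monotonicity: γ (α - ν) ≤ γ ((1-θ)•α + θ•0)
  have hm1 : γ (α - ν) ≤ γ ((1 - θ) • α + θ • ((0 : ℝ), (0 : ℝ))) := by
    apply hmono _ _ hmemu hmemαν <;>
      simp [Prod.smul_fst, Prod.smul_snd, Prod.fst_sub, Prod.snd_sub, smul_eq_mul] <;>
      nlinarith
  -- monotonicity: γ α ≤ γ (α - ν)
  have hm2 : γ α ≤ γ (α - ν) := by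
    apply hmono _ _ hmemαν hmemα <;>
      simp [Prod.fst_sub, Prod.snd_sub] <;> linarith
  set D : ℝ := γ (α - ν) - γ α with hD
  have hDnn : 0 ≤ D := by simp [hD]; linarith
  have hkey : D ≤ θ * (1 + D) := by
    have : γ (α - ν) ≤ (1 - θ) * γ α + θ * γ (0, 0) := le_trans hm1 hcvx
    nlinarith [hval]
  have hD2θ : D ≤ 2 * θ := by nlinarith
  have hmain : D ≤ 2 * max ν.1 ν.2 / min α.1 α.2 := by
    have hθle : θ ≤ max ν.1 ν.2 / min α.1 α.2 := min_le_left _ _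
    calc D ≤ 2 * θ := hD2θ
      _ ≤ 2 * (max ν.1 ν.2 / min α.1 α.2) := by linarith
      _ = 2 * max ν.1 ν.2 / min α.1 α.2 := by ring
  refine ⟨hmain, ?_⟩
  intro κ n₁ n₂ hκ hn₁ hn₂ h1 h2
  have hs1 : 0 < Real.sqrt n₁ := Real.sqrt_pos.mpr (by exact_mod_cast hn₁)
  have hs2 : 0 < Real.sqrt n₂ := Real.sqrt_pos.mpr (by exact_mod_cast hn₂)
  have hmaxeq : max ν.1 ν.2 = κ / min (Real.sqrt n₁) (Real.sqrt n₂) := by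
    rcases le_total (Real.sqrt n₁) (Real.sqrt n₂) with h | h
    · rw [min_eq_left h, max_eq_left, h1]
      rw [h1, h2]
      exact div_le_div_of_nonneg_left (le_of_lt hκ) hs1 h
    · rw [min_eq_right h, max_eq_right, h2]
      rw [h1, h2]
      exact div_le_div_of_nonneg_left (le_of_lt hκ) hs2 h
  have hms : 0 < min (Real.sqrt n₁) (Real.sqrt n₂) := lt_min hs1 hs2
  calc D ≤ 2 * max ν.1 ν.2 / min α.1 α.2 := hmain
    _ = 2 * κ / (min α.1 α.2 * min (Real.sqrt n₁) (Real.sqrt n₂)) := by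
        rw [hmaxeq]; field_simp
end
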